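/- Let X ⊆ ℝ² be a closed disk (a closed ball of some radius ρ ≥ 0 centered at some point c ∈ ℝ²), so that V_X = {j − i : i, j ∈ X} is the closed ball of radius 2ρ centered at the origin. Let ℓ : [0,∞) → [0,∞), define D_X = {(‖v‖, ‖v′‖) : v, v′ ∈ ℝ², v′ − v ∈ V_X} and ℓ_X(r, r′) = inf { ℓ(‖v − v′‖) : ‖v‖ = r, ‖v′‖ = r′, v − v′ ∈ V_X }. Suppose f : ℝ² → [0,∞) satisfies f(v) ≤ e^{ℓ(‖v − v′‖)} · f(v′) for ALL v, v′ ∈ ℝ² with v − v′ ∈ V_X, and is integrable on circles. Define R(r) = (1/(2π)) ∫₀^{2π} f(r cos θ, r sin θ) dθ. Then R(r) ≤ e^{ℓ_X(r, r′)} · R(r′) for all (r, r′) ∈ D_X. -/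

import Mathlib

open MeasureTheory Real InnerProductGeometry

/-!
Since `X` is a disk of radius `ρ`, `V_X` is the disk of radius `2ρ` about the origin, so whether
`v - v' ∈ V_X` depends only on `‖v - v'‖`, which is unchanged when both points are rotated by the
same angle. Hence the constraint compares `f` at angle `θ` on the circle of radius `‖v‖` with `f`
at angle `θ + ∠(v, v')` on the circle of radius `‖v'‖`, for every `θ`. Integrating over `θ` and
using periodicity gives `R ‖v‖ ≤ exp (ℓ ‖v - v'‖) * R ‖v'‖`, and this passes to the infimum over
such pairs because it is continuous in the exponent.
-/

theorem Continuous.le_apply_csInf {α β : Type*} [ConditionallyCompleteLinearOrder α]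
    [TopologicalSpace α] [OrderTopology α] [TopologicalSpace β] [Preorder β]
    [OrderClosedTopology β]
    {g : α → β} (hg : Continuous g) {S : Set α} (hne : S.Nonempty) (hbdd : BddBelow S) {b : β}
    (h : ∀ z ∈ S, b ≤ g z) : b ≤ g (sInf S) :=
  closure_minimal h (isClosed_le continuous_const hg) (csInf_mem_closure hne hbdd)

theorem Function.Periodic.intervalIntegral_le_mul_of_le_comp_add {f g : ℝ → ℝ} {T C φ : ℝ}
    (hT : 0 < T) (hg : Function.Periodic g T) (hf : IntervalIntegrable f volume 0 T)
    (hgi : IntervalIntegrable g volume 0 T) (h : ∀ θ, f θ ≤ C * g (θ + φ)) :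
    ∫ θ in (0)..T, f θ ≤ C * ∫ θ in (0)..T, g θ := by
  have hg_shift : IntervalIntegrable (fun θ => g (θ + φ)) volume 0 T := by
    simpa using (hg.intervalIntegrable₀ hT.ne' hgi φ (T + φ)).comp_add_right φ
  calc ∫ θ in (0)..T, f θ ≤ ∫ θ in (0)..T, C * g (θ + φ) :=
        intervalIntegral.integral_mono_on hT.le hf (hg_shift.const_mul C) fun θ _ => h θ
    _ = C * ∫ θ in (0)..T, g θ := by
        rw [intervalIntegral.integral_const_mul, intervalIntegral.integral_comp_add_right,
          zero_add, add_comm, hg.intervalIntegral_add_eq φ 0, zero_add]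

noncomputable def polarPoint (r θ : ℝ) : EuclideanSpace ℝ (Fin 2) := !₂[r * cos θ, r * sin θ]

theorem periodic_polarPoint (r : ℝ) : Function.Periodic (polarPoint r) (2 * π) := by
  intro θ
  simp only [polarPoint, cos_add_two_pi, sin_add_two_pi]

theorem norm_polarPoint_sub_polarPoint_sq (r r' θ ψ : ℝ) :
    ‖polarPoint r θ - polarPoint r' ψ‖ ^ 2 = r ^ 2 + r' ^ 2 - 2 * r * r' * cos (ψ - θ) := by
  rw [EuclideanSpace.real_norm_sq_eq, Fin.sum_univ_two, cos_sub]
  simp only [polarPoint, PiLp.sub_apply, Matrix.cons_val_zero, Matrix.cons_val_one]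
  linear_combination r ^ 2 * sin_sq_add_cos_sq θ + r' ^ 2 * sin_sq_add_cos_sq ψ

theorem norm_polarPoint_sub_polarPoint_add_angle (v v' : EuclideanSpace ℝ (Fin 2)) (θ : ℝ) :
    ‖polarPoint ‖v‖ θ - polarPoint ‖v'‖ (θ + angle v v')‖ = ‖v - v'‖ := by
  rw [← sq_eq_sq₀ (norm_nonneg _) (norm_nonneg _), norm_polarPoint_sub_polarPoint_sq,
    add_sub_cancel_left, sq ‖v - v'‖,
    norm_sub_sq_eq_norm_sq_add_norm_sq_sub_two_mul_norm_mul_norm_mul_cos_angle]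
  ring

theorem intervalIntegral_comp_polarPoint_le {f : EuclideanSpace ℝ (Fin 2) → ℝ}
    {v v' : EuclideanSpace ℝ (Fin 2)} {C : ℝ}
    (hf : ∀ w w' : EuclideanSpace ℝ (Fin 2), ‖w - w'‖ = ‖v - v'‖ → f w ≤ C * f w')
    (hint : IntervalIntegrable (fun θ => f (polarPoint ‖v‖ θ)) volume 0 (2 * π))
    (hint' : IntervalIntegrable (fun θ => f (polarPoint ‖v'‖ θ)) volume 0 (2 * π)) :
    ∫ θ in (0)..2 * π, f (polarPoint ‖v‖ θ) ≤ C * ∫ θ in (0)..2 * π, f (polarPoint ‖v'‖ θ) :=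
  ((periodic_polarPoint ‖v'‖).comp f).intervalIntegral_le_mul_of_le_comp_add two_pi_pos
    hint hint' fun θ => hf _ _ (norm_polarPoint_sub_polarPoint_add_angle v v' θ)

theorem circularization_inherits_strict_privacy_general
    (c : EuclideanSpace ℝ (Fin 2)) (ρ : ℝ) (hρ : 0 ≤ ρ)
    (X : Set (EuclideanSpace ℝ (Fin 2))) (hX : X = Metric.closedBall c ρ)
    (ℓ : ℝ → ℝ) (hℓ_nonneg : ∀ d : ℝ, 0 ≤ d → 0 ≤ ℓ d)
    (f : EuclideanSpace ℝ (Fin 2) → ℝ)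
    (hf_priv : ∀ v v' : EuclideanSpace ℝ (Fin 2),
      v - v' ∈ {u : EuclideanSpace ℝ (Fin 2) | ∃ i ∈ X, ∃ j ∈ X, u = j - i} →
        f v ≤ Real.exp (ℓ ‖v - v'‖) * f v')
    (hf_circ_int : ∀ r : ℝ, 0 ≤ r →
      IntervalIntegrable
        (fun θ : ℝ => f (!₂[r * Real.cos θ, r * Real.sin θ] : EuclideanSpace ℝ (Fin 2)))
        volume 0 (2 * Real.pi))
    (R : ℝ → ℝ)
    (hR : ∀ r : ℝ, R r = (1 / (2 * Real.pi)) *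
      ∫ θ in (0 : ℝ)..(2 * Real.pi),
        f (!₂[r * Real.cos θ, r * Real.sin θ] : EuclideanSpace ℝ (Fin 2))) :
    ∀ r r' : ℝ,
      (r, r') ∈ {p : ℝ × ℝ | ∃ v v' : EuclideanSpace ℝ (Fin 2),
          p.1 = ‖v‖ ∧ p.2 = ‖v'‖ ∧
          v' - v ∈ {u : EuclideanSpace ℝ (Fin 2) | ∃ i ∈ X, ∃ j ∈ X, u = j - i}} →
        R r ≤ Real.exp (sInf {z : ℝ | ∃ v v' : EuclideanSpace ℝ (Fin 2),
            ‖v‖ = r ∧ ‖v'‖ = r' ∧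
            v - v' ∈ {u : EuclideanSpace ℝ (Fin 2) | ∃ i ∈ X, ∃ j ∈ X, u = j - i} ∧
            z = ℓ ‖v - v'‖}) * R r' := by
  have hVX : {u : EuclideanSpace ℝ (Fin 2) | ∃ i ∈ X, ∃ j ∈ X, u = j - i} =
      Metric.closedBall 0 (2 * ρ) := by
    rw [two_mul, ← sub_self c, ← closedBall_sub_closedBall hρ hρ, ← hX]
    ext u
    constructor <;> rintro ⟨a, ha, b, hb, rfl⟩ <;> exact ⟨b, hb, a, ha, rfl⟩
  simp only [hVX, Metric.mem_closedBall, dist_zero_right] at hf_priv ⊢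
  rintro _ _ ⟨v, v', rfl, rfl, hvv'⟩
  refine (show Continuous fun z => exp z * R ‖v'‖ by fun_prop).le_apply_csInf ?_ ?_ ?_
  · exact ⟨_, v, v', rfl, rfl, by rwa [norm_sub_rev], rfl⟩
  · exact ⟨0, by rintro _ ⟨w, w', -, -, -, rfl⟩; exact hℓ_nonneg _ (norm_nonneg _)⟩
  rintro _ ⟨w, w', hw, hw', hww', rfl⟩
  rw [hR, hR, mul_left_comm, ← hw, ← hw']
  refine mul_le_mul_of_nonneg_left ?_ (by positivity)
  exact intervalIntegral_comp_polarPoint_le (fun u u' h => h ▸ hf_priv u u' (h.le.trans hww'))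
    (hf_circ_int _ (norm_nonneg _)) (hf_circ_int _ (norm_nonneg _))

/-- If `X` is a closed disk, `f` satisfies the `ℓ`-privacy constraint for
ALL pairs of vectors with difference in `V_X` and is integrable on circles, then its
circularization `R r = (1/(2π)) ∫₀^{2π} f (r cos θ, r sin θ) dθ` satisfies
`R r ≤ exp (ℓ_X (r, r')) * R r'` for all `(r, r') ∈ D_X`. -/
theorem circularization_inherits_strict_privacy
    (c : EuclideanSpace ℝ (Fin 2)) (ρ : ℝ) (hρ : 0 ≤ ρ)
    (X : Set (EuclideanSpace ℝ (Fin 2))) (hX : X = Metric.closedBall c ρ)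
    (ℓ : ℝ → ℝ) (hℓ_nonneg : ∀ d : ℝ, 0 ≤ d → 0 ≤ ℓ d)
    (f : EuclideanSpace ℝ (Fin 2) → ℝ) (hf_nonneg : ∀ v, 0 ≤ f v)
    (hf_priv : ∀ v v' : EuclideanSpace ℝ (Fin 2),
      v - v' ∈ {u : EuclideanSpace ℝ (Fin 2) | ∃ i ∈ X, ∃ j ∈ X, u = j - i} →
        f v ≤ Real.exp (ℓ ‖v - v'‖) * f v')
    (hf_circ_int : ∀ r : ℝ, 0 ≤ r →
      IntervalIntegrable
        (fun θ : ℝ => f (!₂[r * Real.cos θ, r * Real.sin θ] : EuclideanSpace ℝ (Fin 2)))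
        volume 0 (2 * Real.pi))
    (R : ℝ → ℝ)
    (hR : ∀ r : ℝ, R r = (1 / (2 * Real.pi)) *
      ∫ θ in (0 : ℝ)..(2 * Real.pi),
        f (!₂[r * Real.cos θ, r * Real.sin θ] : EuclideanSpace ℝ (Fin 2))) :
    ∀ r r' : ℝ,
      (r, r') ∈ {p : ℝ × ℝ | ∃ v v' : EuclideanSpace ℝ (Fin 2),
          p.1 = ‖v‖ ∧ p.2 = ‖v'‖ ∧
          v' - v ∈ {u : EuclideanSpace ℝ (Fin 2) | ∃ i ∈ X, ∃ j ∈ X, u = j - i}} →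
        R r ≤ Real.exp (sInf {z : ℝ | ∃ v v' : EuclideanSpace ℝ (Fin 2),
            ‖v‖ = r ∧ ‖v'‖ = r' ∧
            v - v' ∈ {u : EuclideanSpace ℝ (Fin 2) | ∃ i ∈ X, ∃ j ∈ X, u = j - i} ∧
            z = ℓ ‖v - v'‖}) * R r' :=
  circularization_inherits_strict_privacy_general c ρ hρ X hX ℓ hℓ_nonneg f hf_priv hf_circ_int R hR
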